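/- arXiv:2410.17746 — 6 statements merged into one kernel-verified Lean document; each statement's English description precedes it below -/
import Mathlib

section
/- If Δ̃ is obtained from a simplicial complex Δ by contracting an admissible edge e = {a,b} (identifying a and b, where e is contained in no induced 4-cycle of the 1-skeleton and merging/removing the appropriate faces), then f_{Δ̃}(t) = f_Δ(t) − t(1+t) f_{lk_Δ(e)}(t). -/
open Polynomial Finset

variable {V : Type*} [DecidableEq V]

/-- A (finite, abstract) simplicial complex: contains the empty face and is
closed under taking subsets. -/
def IsSimpComplex (K : Finset (Finset V)) : Prop :=
  ∅ ∈ K ∧ ∀ A ∈ K, ∀ B ⊆ A, B ∈ K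

/-- The link of a face `F`: all faces `A` with `A ∪ F ∈ K` and `A ∩ F = ∅`. -/
def lk (K : Finset (Finset V)) (F : Finset V) : Finset (Finset V) :=
  K.filter fun A => A ∪ F ∈ K ∧ Disjoint A F

/-- The face polynomial `f_K(t) = ∑_{A ∈ K} t^{|A|}` (the empty face contributes 1). -/
noncomputable def fpoly (K : Finset (Finset V)) : Polynomial ℤ :=
  ∑ A ∈ K, Polynomial.X ^ A.card

/-- `∑_{A ∈ K} (t-1)^{d-|A|} = ∑_i f_{i-1}(K) (t-1)^{d-i} = ∑_k h_k(K) t^{d-k}`,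
the (descending form of the) h-polynomial of a `(d-1)`-dimensional complex. -/
noncomputable def hpoly (d : ℕ) (K : Finset (Finset V)) : Polynomial ℤ :=
  ∑ A ∈ K, (Polynomial.X - 1) ^ (d - A.card)

/-- `faceCount K i = f_{i-1}(K)`, the number of faces of cardinality `i`. -/
def faceCount (K : Finset (Finset V)) (i : ℕ) : ℕ :=
  (K.filter fun A => A.card = i).card

/-- A flag complex: every clique (set of pairwise adjacent vertices) is a face. -/
def IsFlag (K : Finset (Finset V)) : Prop :=
  ∀ A : Finset V, A.Nonempty → (∀ x ∈ A, ({x} : Finset V) ∈ K) →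
    (∀ x ∈ A, ∀ y ∈ A, x ≠ y → ({x, y} : Finset V) ∈ K) → A ∈ K

/-- The edge `{a,b}` is admissible: it is contained in no induced 4-cycle
`a - b - c - d - a` of the 1-skeleton. -/
def AdmissibleEdge (K : Finset (Finset V)) (a b : V) : Prop :=
  ¬ ∃ c d : V, ({a, b, c, d} : Finset V).card = 4 ∧
    ({b, c} : Finset V) ∈ K ∧ ({c, d} : Finset V) ∈ K ∧ ({d, a} : Finset V) ∈ K ∧
    ({a, c} : Finset V) ∉ K ∧ ({b, d} : Finset V) ∉ K

/-- The edge contraction identifying `b` with `a` (faces containing `e` are removed,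
faces `F ∪ {a}`, `F ∪ {b}` with `F ∈ lk(e)` get merged). -/
def contractEdge (K : Finset (Finset V)) (a b : V) : Finset (Finset V) :=
  K.image fun A => if b ∈ A then insert a (A.erase b) else A

/-- contracting an admissible edge of a flag complex satisfies
`f_{Δ̃}(t) = f_Δ(t) − t(1+t) f_{lk_Δ(e)}(t)`. -/
theorem stmt1 (Δ : Finset (Finset V)) (a b : V)
    (hΔ : IsSimpComplex Δ) (hflag : IsFlag Δ) (hab : a ≠ b)
    (he : ({a, b} : Finset V) ∈ Δ) (hadm : AdmissibleEdge Δ a b) :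
    fpoly (contractEdge Δ a b)
      = fpoly Δ - Polynomial.X * (1 + Polynomial.X) * fpoly (lk Δ {a, b}) := by
  classical
  obtain ⟨-, hdc⟩ := hΔ
  set S0 : Finset (Finset V) := Δ.filter (fun A => b ∉ A) with hS0
  set S1 : Finset (Finset V) := Δ.filter (fun A => b ∈ A ∧ a ∉ A) with hS1
  set S2 : Finset (Finset V) := Δ.filter (fun A => b ∈ A ∧ a ∈ A) with hS2
  set T1 : Finset (Finset V) := S1.image (fun A => insert a (A.erase b)) with hT1
  set L : Finset (Finset V) := lk Δ {a, b} with hLdef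
  have hunion : ∀ F : Finset V, F ∪ ({a, b} : Finset V) = insert a (insert b F) := by
    intro F; ext x; simp [Finset.mem_union, Finset.mem_insert]
  -- facts about members of L
  have hLfact : ∀ F ∈ L, F ∈ Δ ∧ insert a (insert b F) ∈ Δ ∧ a ∉ F ∧ b ∉ F := by
    intro F hF
    rw [hLdef, lk, Finset.mem_filter] at hF
    obtain ⟨h1, h2, h3⟩ := hF
    rw [hunion] at h2
    exact ⟨h1, h2, Finset.disjoint_right.mp h3 (by simp),
      Finset.disjoint_right.mp h3 (by simp)⟩
  have hLmem : ∀ F : Finset V, F ∈ Δ → insert a (insert b F) ∈ Δ → a ∉ F → b ∉ F →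
      F ∈ L := by
    intro F h1 h2 h3 h4
    rw [hLdef, lk, Finset.mem_filter, hunion]
    refine ⟨h1, h2, ?_⟩
    rw [Finset.disjoint_right]
    intro x hx
    rcases Finset.mem_insert.mp hx with rfl | hx
    · exact h3
    · rw [Finset.mem_singleton] at hx; subst hx; exact h4
  -- the image decomposition
  have himg : contractEdge Δ a b = S0 ∪ T1 := by
    ext G
    constructor
    · intro hG
      rw [contractEdge, Finset.mem_image] at hG
      obtain ⟨A, hA, hGA⟩ := hG
      by_cases hb : b ∈ A
      · rw [if_pos hb] at hGA
        by_cases ha : a ∈ A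
        · -- G = A.erase b, comes from A.erase a ∈ S1
          refine Finset.mem_union_right _ (Finset.mem_image.mpr ⟨A.erase a, ?_, ?_⟩)
          · rw [hS1, Finset.mem_filter]
            exact ⟨hdc A hA _ (Finset.erase_subset _ _),
              Finset.mem_erase.mpr ⟨fun h => hab h.symm, hb⟩, Finset.notMem_erase _ _⟩
          · rw [Finset.erase_right_comm, ← hGA]
            have haeb : a ∈ A.erase b := Finset.mem_erase.mpr ⟨hab, ha⟩
            rw [Finset.insert_erase haeb, Finset.insert_eq_self.mpr haeb]
        · refine Finset.mem_union_right _ (Finset.mem_image.mpr ⟨A, ?_, hGA⟩)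
          rw [hS1, Finset.mem_filter]; exact ⟨hA, hb, ha⟩
      · rw [if_neg hb] at hGA
        refine Finset.mem_union_left _ ?_
        rw [hS0, Finset.mem_filter, ← hGA]; exact ⟨hA, hb⟩
    · intro hG
      rw [contractEdge, Finset.mem_image]
      rcases Finset.mem_union.mp hG with hG | hG
      · rw [hS0, Finset.mem_filter] at hG
        exact ⟨G, hG.1, by rw [if_neg hG.2]⟩
      · rw [hT1, Finset.mem_image] at hG
        obtain ⟨A, hA, hGA⟩ := hG
        rw [hS1, Finset.mem_filter] at hA
        exact ⟨A, hA.1, by rw [if_pos hA.2.1]; exact hGA⟩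
  -- the intersection
  have hinter : S0 ∩ T1 = L.image (fun F => insert a F) := by
    ext G
    constructor
    · intro hG
      obtain ⟨hG0, hGT⟩ := Finset.mem_inter.mp hG
      rw [hS0, Finset.mem_filter] at hG0
      obtain ⟨hGΔ, hbG⟩ := hG0
      rw [hT1, Finset.mem_image] at hGT
      obtain ⟨A, hA, hGA⟩ := hGT
      rw [hS1, Finset.mem_filter] at hA
      obtain ⟨hAΔ, hbA, haA⟩ := hA
      have haG : a ∈ G := by rw [← hGA]; exact Finset.mem_insert_self _ _
      have hFG : ∀ y ∈ A, y ≠ b → y ∈ G := by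
        intro y hy hyb
        rw [← hGA]
        exact Finset.mem_insert_of_mem (Finset.mem_erase.mpr ⟨hyb, hy⟩)
      -- flag: insert a A ∈ Δ
      have hins : insert a A ∈ Δ := by
        apply hflag
        · exact ⟨a, Finset.mem_insert_self _ _⟩
        · intro x hx
          rcases Finset.mem_insert.mp hx with rfl | hxA
          · exact hdc _ he {x} (by simp)
          · exact hdc A hAΔ {x} (Finset.singleton_subset_iff.mpr hxA)
        · intro x hx y hy hxy
          have key : ∀ z ∈ A, z ≠ a → ({a, z} : Finset V) ∈ Δ := by
            intro z hz hza
            by_cases hzb : z = b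
            · subst hzb; exact he
            · exact hdc G hGΔ {a, z}
                (Finset.insert_subset_iff.mpr ⟨haG,
                  Finset.singleton_subset_iff.mpr (hFG z hz hzb)⟩)
          rcases Finset.mem_insert.mp hx with rfl | hxA
          · rcases Finset.mem_insert.mp hy with rfl | hyA
            · exact absurd rfl hxy
            · exact key y hyA (Ne.symm hxy)
          · rcases Finset.mem_insert.mp hy with rfl | hyA
            · rw [Finset.pair_comm]; exact key x hxA hxy
            · exact hdc A hAΔ {x, y}
                (Finset.insert_subset_iff.mpr ⟨hxA, Finset.singleton_subset_iff.mpr hyA⟩)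
      refine Finset.mem_image.mpr ⟨A.erase b, ?_, hGA⟩
      apply hLmem
      · exact hdc A hAΔ _ (Finset.erase_subset _ _)
      · rw [Finset.insert_erase hbA]; exact hins
      · exact fun h => haA (Finset.mem_of_mem_erase h)
      · exact Finset.notMem_erase _ _
    · intro hG
      obtain ⟨F, hF, hGF⟩ := Finset.mem_image.mp hG
      obtain ⟨hFΔ, hFab, haF, hbF⟩ := hLfact F hF
      rw [Finset.mem_inter]
      constructor
      · rw [hS0, Finset.mem_filter, ← hGF]
        refine ⟨hdc _ hFab _ ?_, ?_⟩
        · exact Finset.insert_subset_insert a (Finset.subset_insert b F)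
        · simp only [Finset.mem_insert]
          rintro (h | h)
          · exact hab h.symm
          · exact hbF h
      · rw [hT1, Finset.mem_image]
        refine ⟨insert b F, ?_, ?_⟩
        · rw [hS1, Finset.mem_filter]
          refine ⟨hdc _ hFab _ (Finset.subset_insert a _), Finset.mem_insert_self _ _, ?_⟩
          simp only [Finset.mem_insert]
          rintro (h | h)
          · exact hab h
          · exact haF h
        · rw [Finset.erase_insert hbF, hGF]
  -- S2 as image of L
  have hS2img : S2 = L.image (fun F => insert a (insert b F)) := by
    ext A
    constructor
    · intro hA
      rw [hS2, Finset.mem_filter] at hA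
      obtain ⟨hAΔ, hbA, haA⟩ := hA
      have hbA' : b ∈ A.erase a := Finset.mem_erase.mpr ⟨fun h => hab h.symm, hbA⟩
      have hFA : insert a (insert b ((A.erase a).erase b)) = A := by
        rw [Finset.insert_erase hbA', Finset.insert_erase haA]
      refine Finset.mem_image.mpr ⟨(A.erase a).erase b, ?_, hFA⟩
      apply hLmem
      · exact hdc A hAΔ _ ((Finset.erase_subset _ _).trans (Finset.erase_subset _ _))
      · rw [hFA]; exact hAΔ
      · exact fun h => Finset.notMem_erase a _ (Finset.mem_of_mem_erase h)
      · exact Finset.notMem_erase _ _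
    · intro hA
      obtain ⟨F, hF, hFA⟩ := Finset.mem_image.mp hA
      obtain ⟨hFΔ, hFab, haF, hbF⟩ := hLfact F hF
      rw [hS2, Finset.mem_filter, ← hFA]
      exact ⟨hFab, Finset.mem_insert_of_mem (Finset.mem_insert_self _ _),
        Finset.mem_insert_self _ _⟩
  -- sum over Δ splits
  have hΔsum : ∑ A ∈ Δ, (Polynomial.X : Polynomial ℤ) ^ A.card
      = (∑ A ∈ S0, (Polynomial.X : Polynomial ℤ) ^ A.card)
        + (∑ A ∈ S1, (Polynomial.X : Polynomial ℤ) ^ A.card)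
        + (∑ A ∈ S2, (Polynomial.X : Polynomial ℤ) ^ A.card) := by
    rw [← Finset.sum_filter_add_sum_filter_not Δ (fun A => b ∈ A)
      (fun A => (Polynomial.X : Polynomial ℤ) ^ A.card)]
    rw [← Finset.sum_filter_add_sum_filter_not (Δ.filter (fun A => b ∈ A))
      (fun A => a ∈ A) (fun A => (Polynomial.X : Polynomial ℤ) ^ A.card)]
    rw [Finset.filter_filter, Finset.filter_filter]
    rw [hS0, hS1, hS2]
    ring_nf
  -- sums over images
  have hT1sum : ∑ G ∈ T1, (Polynomial.X : Polynomial ℤ) ^ G.card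
      = ∑ A ∈ S1, (Polynomial.X : Polynomial ℤ) ^ A.card := by
    rw [hT1, Finset.sum_image]
    · apply Finset.sum_congr rfl
      intro A hA
      rw [hS1, Finset.mem_filter] at hA
      obtain ⟨hAΔ, hbA, haA⟩ := hA
      rw [Finset.card_insert_of_notMem (fun h => haA (Finset.mem_of_mem_erase h)),
        Finset.card_erase_of_mem hbA]
      congr 1
      have : 0 < A.card := Finset.card_pos.mpr ⟨b, hbA⟩
      omega
    · intro A hA A' hA' h
      rw [hS1, Finset.mem_coe, Finset.mem_filter] at hA hA'
      have ha : a ∉ A.erase b := fun h' => hA.2.2 (Finset.mem_of_mem_erase h')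
      have ha' : a ∉ A'.erase b := fun h' => hA'.2.2 (Finset.mem_of_mem_erase h')
      have h2 : A.erase b = A'.erase b := by
        have := congrArg (fun s => Finset.erase s a) h
        simpa [Finset.erase_insert ha, Finset.erase_insert ha'] using this
      calc A = insert b (A.erase b) := (Finset.insert_erase hA.2.1).symm
        _ = insert b (A'.erase b) := by rw [h2]
        _ = A' := Finset.insert_erase hA'.2.1
  have hintersum : ∑ G ∈ S0 ∩ T1, (Polynomial.X : Polynomial ℤ) ^ G.card
      = Polynomial.X * ∑ F ∈ L, (Polynomial.X : Polynomial ℤ) ^ F.card := by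
    rw [hinter, Finset.sum_image, Finset.mul_sum]
    · apply Finset.sum_congr rfl
      intro F hF
      obtain ⟨-, -, haF, -⟩ := hLfact F hF
      rw [Finset.card_insert_of_notMem haF]
      ring
    · intro F hF F' hF' h
      obtain ⟨-, -, haF, -⟩ := hLfact F hF
      obtain ⟨-, -, haF', -⟩ := hLfact F' hF'
      have := congrArg (fun s => Finset.erase s a) h
      simpa [Finset.erase_insert haF, Finset.erase_insert haF'] using this
  have hS2sum : ∑ A ∈ S2, (Polynomial.X : Polynomial ℤ) ^ A.card
      = Polynomial.X ^ 2 * ∑ F ∈ L, (Polynomial.X : Polynomial ℤ) ^ F.card := by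
    rw [hS2img, Finset.sum_image, Finset.mul_sum]
    · apply Finset.sum_congr rfl
      intro F hF
      obtain ⟨-, -, haF, hbF⟩ := hLfact F hF
      have h1 : a ∉ insert b F := by
        simp only [Finset.mem_insert]
        rintro (h | h)
        · exact hab h
        · exact haF h
      rw [Finset.card_insert_of_notMem h1, Finset.card_insert_of_notMem hbF]
      ring
    · intro F hF F' hF' h
      obtain ⟨-, -, haF, hbF⟩ := hLfact F hF
      obtain ⟨-, -, haF', hbF'⟩ := hLfact F' hF'
      have h1 : a ∉ insert b F := by
        simp only [Finset.mem_insert]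
        rintro (h | h)
        · exact hab h
        · exact haF h
      have h1' : a ∉ insert b F' := by
        simp only [Finset.mem_insert]
        rintro (h | h)
        · exact hab h
        · exact haF' h
      have h2 : insert b F = insert b F' := by
        have := congrArg (fun s => Finset.erase s a) h
        simpa [Finset.erase_insert h1, Finset.erase_insert h1'] using this
      have := congrArg (fun s => Finset.erase s b) h2
      simpa [Finset.erase_insert hbF, Finset.erase_insert hbF'] using this
  -- put it together
  have hsum_union : ∑ G ∈ S0 ∪ T1, (Polynomial.X : Polynomial ℤ) ^ G.card
      = (∑ G ∈ S0, (Polynomial.X : Polynomial ℤ) ^ G.card)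
        + (∑ G ∈ T1, (Polynomial.X : Polynomial ℤ) ^ G.card)
        - ∑ G ∈ S0 ∩ T1, (Polynomial.X : Polynomial ℤ) ^ G.card :=
    eq_sub_of_add_eq (Finset.sum_union_inter)
  unfold fpoly
  rw [himg, hsum_union, hT1sum, hintersum, hΔsum, hS2sum]
  ring
end

section
/- If Δ' is the stellar subdivision of a (d−1)-dimensional simplicial complex Δ at an edge e, then the h-polynomials satisfy h_{Δ'}(t) = h_Δ(t) + t·h_{lk_Δ(e)}(t); equivalently h_i(Δ') = h_i(Δ) + h_{i−1}(lk_Δ(e)) for all i. -/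
/-!
Split both complexes along whether a face contains `e`. The faces not containing `e` are
common to `Δ` and `Δ'`. The faces of `Δ` containing `e` are the `A ∪ e` with `A ∈ lk_Δ(e)`,
and contribute `h_{lk(e)}`. The new faces of `Δ'` are the `v ∪ B ∪ A` with `B ⊊ e` and
`A ∈ lk_Δ(e)` (the faces `B ∪ A` without `v` already lie in `Δ`), and for each `A` the
three choices of `B` contribute `(t-1)^{k+1} + 2(t-1)^k = (1 + t)(t-1)^k`, where
`k = d - 2 - |A|`.
-/

open Polynomial Finset

variable {V : Type*} [DecidableEq V]

/-- Stellar subdivision at the edge `e` with new vertex `v`: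
`Δ' = (Δ ∖ St_Δ(e)) ∪ {A ∪ B : A ∈ ∂e * lk_Δ(e), B ⊆ {v}}`. -/
def stellarSubdiv (K : Finset (Finset V)) (e : Finset V) (v : V) : Finset (Finset V) :=
  K.filter (fun A => ¬ e ⊆ A) ∪
    ((e.powerset.filter (· ≠ e)) ×ˢ lk K e).image (fun p => p.1 ∪ p.2) ∪
    ((e.powerset.filter (· ≠ e)) ×ˢ lk K e).image (fun p => insert v (p.1 ∪ p.2))

theorem mem_lk {K : Finset (Finset V)} {F A : Finset V} :
    A ∈ lk K F ↔ A ∈ K ∧ A ∪ F ∈ K ∧ Disjoint A F := by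
  simp only [lk, mem_filter]

theorem filter_superset_eq_image_lk {K : Finset (Finset V)} (hK : IsSimpComplex K)
    (F : Finset V) : K.filter (F ⊆ ·) = (lk K F).image (· ∪ F) := by
  ext A
  simp only [mem_filter, mem_image, mem_lk]
  constructor
  · rintro ⟨hA, hFA⟩
    refine ⟨A \ F, ⟨hK.2 A hA _ sdiff_subset, ?_, sdiff_disjoint⟩, sdiff_union_of_subset hFA⟩
    rwa [sdiff_union_of_subset hFA]
  · rintro ⟨A, ⟨-, hAF, -⟩, rfl⟩
    exact ⟨hAF, subset_union_right⟩

theorem hpoly_eq_sum_filter_add_hpoly_lk {K : Finset (Finset V)} (hK : IsSimpComplex K)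
    (d : ℕ) (F : Finset V) :
    hpoly d K = ∑ A ∈ K.filter (¬ F ⊆ ·), (X - 1) ^ (d - A.card)
      + hpoly (d - F.card) (lk K F) := by
  have hinj : Set.InjOn (· ∪ F) (lk K F : Set (Finset V)) := fun A hA B hB h => by
    rw [← union_sdiff_cancel_right (mem_lk.1 hA).2.2,
      ← union_sdiff_cancel_right (mem_lk.1 hB).2.2]
    exact congrArg (· \ F) h
  rw [hpoly, ← sum_filter_not_add_sum_filter K (F ⊆ ·), filter_superset_eq_image_lk hK,
    sum_image hinj, hpoly]
  congr 1
  refine sum_congr rfl fun A hA => ?_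
  rw [card_union_of_disjoint (mem_lk.1 hA).2.2, Nat.sub_sub, add_comm A.card]

/-- The pairs `(B, A)` with `B ⊊ e` and `A ∈ lk_K(e)`, indexing the faces `B ∪ A` of
`∂e * lk_K(e)`. -/
def boundaryLkPairs (K : Finset (Finset V)) (e : Finset V) : Finset (Finset V × Finset V) :=
  (e.powerset.filter (· ≠ e)) ×ˢ lk K e

theorem mem_boundaryLkPairs {K : Finset (Finset V)} {e : Finset V} {p : Finset V × Finset V} :
    p ∈ boundaryLkPairs K e ↔ p.1 ⊆ e ∧ p.1 ≠ e ∧ p.2 ∈ lk K e := by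
  simp only [boundaryLkPairs, mem_product, mem_filter, mem_powerset, and_assoc]

theorem union_subset_of_mem_boundaryLkPairs {K : Finset (Finset V)} {e : Finset V}
    {p : Finset V × Finset V} (hp : p ∈ boundaryLkPairs K e) : p.1 ∪ p.2 ⊆ p.2 ∪ e :=
  union_subset ((mem_boundaryLkPairs.1 hp).1.trans subset_union_right) subset_union_left

theorem union_injOn_subset_disjoint (e : Finset V) :
    Set.InjOn (fun p : Finset V × Finset V => p.1 ∪ p.2) {p | p.1 ⊆ e ∧ Disjoint p.2 e} := by
  have inter_eq : ∀ B A : Finset V, B ⊆ e → Disjoint A e → (B ∪ A) ∩ e = B := fun B A hB hA => by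
    rw [union_inter_distrib_right, inter_eq_left.mpr hB, disjoint_iff_inter_eq_empty.mp hA,
      union_empty]
  have sdiff_eq : ∀ B A : Finset V, B ⊆ e → Disjoint A e → (B ∪ A) \ e = A := fun B A hB hA => by
    rw [union_sdiff_distrib, sdiff_eq_empty_iff_subset.mpr hB, sdiff_eq_self_of_disjoint hA,
      empty_union]
  rintro ⟨B, A⟩ ⟨hB, hA⟩ ⟨B', A'⟩ ⟨hB', hA'⟩ h
  exact Prod.ext
    (by simpa only [inter_eq B A hB hA, inter_eq B' A' hB' hA'] using congrArg (· ∩ e) h)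
    (by simpa only [sdiff_eq B A hB hA, sdiff_eq B' A' hB' hA'] using congrArg (· \ e) h)

theorem image_union_boundaryLkPairs_subset {K : Finset (Finset V)} (hK : IsSimpComplex K)
    (e : Finset V) :
    (boundaryLkPairs K e).image (fun p => p.1 ∪ p.2) ⊆ K.filter (¬ e ⊆ ·) := by
  simp only [subset_iff, mem_image, mem_filter]
  rintro _ ⟨p, hp, rfl⟩
  obtain ⟨hBe, hBne, hA⟩ := mem_boundaryLkPairs.1 hp
  refine ⟨hK.2 _ (mem_lk.1 hA).2.1 _ (union_subset_of_mem_boundaryLkPairs hp), fun he => ?_⟩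
  -- `A` misses `e`, so `e ⊆ B ∪ A` would force `B = e`.
  exact hBne (hBe.antisymm fun x hx => (mem_union.1 (he hx)).resolve_right
    (disjoint_right.1 (mem_lk.1 hA).2.2 hx))

theorem stellarSubdiv_eq_union {K : Finset (Finset V)} (hK : IsSimpComplex K)
    (e : Finset V) (v : V) :
    stellarSubdiv K e v = K.filter (¬ e ⊆ ·) ∪
      (boundaryLkPairs K e).image (fun p => insert v (p.1 ∪ p.2)) := by
  change K.filter (¬ e ⊆ ·) ∪ (boundaryLkPairs K e).image (fun p => p.1 ∪ p.2) ∪ _ = _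
  rw [union_eq_left.mpr (image_union_boundaryLkPairs_subset hK e)]
  rfl

theorem hpoly_stellarSubdiv {K : Finset (Finset V)} (hK : IsSimpComplex K) {e : Finset V}
    {v : V} (hv : ∀ A ∈ K, v ∉ A) (d : ℕ) :
    hpoly d (stellarSubdiv K e v) = ∑ A ∈ K.filter (¬ e ⊆ ·), (X - 1) ^ (d - A.card)
      + ∑ A ∈ lk K e, ∑ B ∈ e.powerset.filter (· ≠ e),
          (X - 1) ^ (d - (B.card + A.card + 1)) := by
  have hvp : ∀ p ∈ boundaryLkPairs K e, v ∉ p.1 ∪ p.2 := fun p hp hmem =>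
    hv _ (mem_lk.1 (mem_boundaryLkPairs.1 hp).2.2).2.1 (union_subset_of_mem_boundaryLkPairs hp hmem)
  have hdisj : Disjoint (K.filter (¬ e ⊆ ·))
      ((boundaryLkPairs K e).image (fun p => insert v (p.1 ∪ p.2))) := by
    simp only [disjoint_right, mem_image, mem_filter]
    rintro _ ⟨p, -, rfl⟩ ⟨hA, -⟩
    exact hv _ hA (mem_insert_self v _)
  have hinj : Set.InjOn (fun p : Finset V × Finset V => insert v (p.1 ∪ p.2))
      (boundaryLkPairs K e : Set (Finset V × Finset V)) := by
    intro p hp q hq h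
    refine union_injOn_subset_disjoint e ?_ ?_ ?_
    · exact ⟨(mem_boundaryLkPairs.1 hp).1, (mem_lk.1 (mem_boundaryLkPairs.1 hp).2.2).2.2⟩
    · exact ⟨(mem_boundaryLkPairs.1 hq).1, (mem_lk.1 (mem_boundaryLkPairs.1 hq).2.2).2.2⟩
    · simpa only [erase_insert (hvp p hp), erase_insert (hvp q hq)] using congrArg (·.erase v) h
  rw [hpoly, stellarSubdiv_eq_union hK, sum_union hdisj, sum_image hinj]
  congr 1
  rw [boundaryLkPairs, sum_product, sum_comm]
  refine sum_congr rfl fun A hA => sum_congr rfl fun B hB => ?_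
  have hp : (B, A) ∈ boundaryLkPairs K e := mem_product.2 ⟨hB, hA⟩
  have hBA : Disjoint B A :=
    disjoint_of_subset_left (mem_boundaryLkPairs.1 hp).1 (mem_lk.1 hA).2.2.symm
  rw [card_insert_of_notMem (hvp _ hp), card_union_of_disjoint hBA]

theorem sum_filter_ne_powerset_pow_of_card_eq_two {R : Type*} [CommRing R] {e : Finset V}
    (he : e.card = 2) (x : R) (n : ℕ) :
    ∑ B ∈ e.powerset.filter (· ≠ e), (x - 1) ^ (n + 1 - B.card)
      = (x - 1) ^ n + x * (x - 1) ^ n := by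
  rw [filter_ne', sum_erase_eq_sub (mem_powerset_self e),
    sum_powerset_apply_card (fun m => (x - 1) ^ (n + 1 - m)), he]
  simp only [sum_range_succ, range_one, sum_singleton, nsmul_eq_mul, Nat.choose_zero_right,
    Nat.choose_succ_self_right, Nat.choose_self, Nat.cast_one, tsub_zero,
    add_tsub_cancel_right]
  ring

theorem stmt2_general (Δ : Finset (Finset V)) (e : Finset V) (v : V) (d : ℕ)
    (hΔ : IsSimpComplex Δ) (hcard : e.card = 2)
    (hdim : ∀ A ∈ Δ, A.card ≤ d) (hv : ∀ A ∈ Δ, v ∉ A) :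
    hpoly d (stellarSubdiv Δ e v) = hpoly d Δ + Polynomial.X * hpoly (d - 2) (lk Δ e) := by
  have hlk_card : ∀ A ∈ lk Δ e, A.card + 2 ≤ d := fun A hA => by
    have h := hdim _ (mem_lk.1 hA).2.1
    rwa [card_union_of_disjoint (mem_lk.1 hA).2.2, hcard] at h
  rw [hpoly_stellarSubdiv hΔ hv, hpoly_eq_sum_filter_add_hpoly_lk hΔ d e, hcard, add_assoc,
    hpoly, mul_sum, ← sum_add_distrib]
  congr 1
  refine sum_congr rfl fun A hA => ?_
  rw [← sum_filter_ne_powerset_pow_of_card_eq_two hcard]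
  refine sum_congr rfl fun B _ => ?_
  have := hlk_card A hA
  congr 1
  omega

/-- for the stellar subdivision `Δ'` of a `(d−1)`-dimensional complex `Δ`
at an edge `e`, `h_{Δ'}(t) = h_Δ(t) + t·h_{lk_Δ(e)}(t)`, i.e. in descending form
`hpoly d Δ' = hpoly d Δ + X * hpoly (d−2) (lk Δ e)`, equivalently
`h_i(Δ') = h_i(Δ) + h_{i−1}(lk_Δ(e))` for all `i`. -/
theorem stmt2 (Δ : Finset (Finset V)) (e : Finset V) (v : V) (d : ℕ)
    (hΔ : IsSimpComplex Δ) (he : e ∈ Δ) (hcard : e.card = 2) (hd : 2 ≤ d)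
    (hdim : ∀ A ∈ Δ, A.card ≤ d) (hv : ∀ A ∈ Δ, v ∉ A) :
    hpoly d (stellarSubdiv Δ e v) = hpoly d Δ + Polynomial.X * hpoly (d - 2) (lk Δ e) :=
  stmt2_general Δ e v d hΔ hcard hdim hv
end

section
/- Suppose the (d−1)-dimensional simplicial complex Γ has a Boolean decomposition Γ = {F ∪ G : F ∈ S, G ⊆ [d − 2|F|]} with S the subcomplex of faces disjoint from [d], and suppose the subcomplex Γ_e ≤ Γ has a Boolean decomposition Γ_e = {F_e ∪ G_e : F_e ∈ S_e, G_e ⊆ [d − 2|F_e| − 2]} with S_e ≤ S. Then Γ' = Γ ∪ (Γ_e * u), for a new vertex u, has a Boolean decomposition with initial part S' = S ∪ (S_e * u): namely Γ' = {F ∪ G : F ∈ S', G ⊆ [d − 2|F|]}. -/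
open Polynomial Finset

variable {V : Type*} [DecidableEq V]

/-- `Γ` (a `(d−1)`-dimensional complex on a vertex set containing `[d] = {1,…,d}`)
has a Boolean decomposition with initial part `S`: `S` is the subcomplex of faces of
`Γ` disjoint from `[d]`, and `Γ = {F ∪ G : F ∈ S, G ⊆ [d − 2|F|]}`. -/
def HasBooleanDecomp (d : ℕ) (Γ S : Finset (Finset ℕ)) : Prop :=
  S = Γ.filter (fun F => Disjoint F (Finset.Icc 1 d)) ∧
  ∀ A : Finset ℕ, A ∈ Γ ↔ ∃ F ∈ S, ∃ G ⊆ Finset.Icc 1 (d - 2 * F.card), A = F ∪ G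

/-! The faces of `Γ` disjoint from `[d]` are those of the form `F ∪ ∅`, so they are `S` again; the
cone faces are `insert u (F ∪ G) = (insert u F) ∪ G`, and adding `u` to `F` raises `|F|` by one,
which turns the bound `d − 2|F| − 2` of `Γ_e` into the bound `d − 2|insert u F|` of `Γ'`. -/

section BooleanDecomp

variable {α : Type*} [DecidableEq α]

theorem filter_disjoint_eq_of_decomp {K T : Finset (Finset α)} {I : Finset α}
    {B : ℕ → Finset α} (hBI : ∀ n, B n ⊆ I) (hT : ∀ F ∈ T, Disjoint F I)
    (hK : ∀ A, A ∈ K ↔ ∃ F ∈ T, ∃ G ⊆ B F.card, A = F ∪ G) :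
    K.filter (Disjoint · I) = T := by
  ext A
  rw [mem_filter, hK]
  constructor
  · rintro ⟨⟨F, hF, G, hG, rfl⟩, hdisj⟩
    have hG_empty : G = ∅ :=
      disjoint_self.mp ((disjoint_union_left.mp hdisj).2.mono_right (hG.trans (hBI _)))
    simpa [hG_empty] using hF
  · intro hA
    exact ⟨⟨A, hA, ∅, empty_subset _, (union_empty A).symm⟩, hT A hA⟩

theorem filter_disjoint_image_insert {K : Finset (Finset α)} {I : Finset α} {u : α}
    (hu : u ∉ I) :
    (K.image (insert u)).filter (Disjoint · I) = (K.filter (Disjoint · I)).image (insert u) := by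
  rw [filter_image]
  congr 1
  exact filter_congr fun A _ => by rw [disjoint_insert_left, and_iff_right hu]

theorem mem_image_insert_iff_of_decomp {K T : Finset (Finset α)} {u : α} {B : ℕ → Finset α}
    (hT : ∀ F ∈ T, u ∉ F) (hK : ∀ A, A ∈ K ↔ ∃ F ∈ T, ∃ G ⊆ B (F.card + 1), A = F ∪ G)
    (A : Finset α) :
    A ∈ K.image (insert u) ↔ ∃ F ∈ T.image (insert u), ∃ G ⊆ B F.card, A = F ∪ G := by
  simp only [mem_image, exists_exists_and_eq_and]
  constructor
  · rintro ⟨_, hA, rfl⟩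
    obtain ⟨F, hF, G, hG, rfl⟩ := (hK _).mp hA
    exact ⟨F, hF, G, card_insert_of_notMem (hT F hF) ▸ hG, (insert_union u F G).symm⟩
  · rintro ⟨F, hF, G, hG, rfl⟩
    rw [card_insert_of_notMem (hT F hF)] at hG
    exact ⟨F ∪ G, (hK _).mpr ⟨F, hF, G, hG, rfl⟩, (insert_union u F G).symm⟩

end BooleanDecomp

theorem stmt7_general (d : ℕ) (Γ S Γe Se : Finset (Finset ℕ)) (u : ℕ)
    (hΓ : HasBooleanDecomp d Γ S)
    (hSe : Se ⊆ S)
    (hΓedec : ∀ A : Finset ℕ,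
      A ∈ Γe ↔ ∃ F ∈ Se, ∃ G ⊆ Finset.Icc 1 (d - 2 * F.card - 2), A = F ∪ G)
    (hud : u ∉ Finset.Icc 1 d) (hu : ∀ A ∈ Γ, u ∉ A) :
    HasBooleanDecomp d (Γ ∪ Γe.image (insert u)) (S ∪ Se.image (insert u)) := by
  obtain ⟨hS, hΓdec⟩ := hΓ
  have hS_mem : ∀ F ∈ S, F ∈ Γ ∧ Disjoint F (Icc 1 d) := fun F hF => mem_filter.mp (hS ▸ hF)
  have hΓe_filter : Γe.filter (Disjoint · (Icc 1 d)) = Se :=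
    filter_disjoint_eq_of_decomp (B := fun n => Icc 1 (d - 2 * n - 2))
      (fun _ => Icc_subset_Icc_right (by omega))
      (fun F hF => (hS_mem F (hSe hF)).2) hΓedec
  have hcone := mem_image_insert_iff_of_decomp (B := fun n => Icc 1 (d - 2 * n))
    (fun F hF => hu F (hS_mem F (hSe hF)).1)
    (fun A => by simpa only [Nat.mul_succ, Nat.sub_sub] using hΓedec A)
  refine ⟨?_, fun A => ?_⟩
  · rw [filter_union, filter_disjoint_image_insert hud, hΓe_filter, ← hS]
  · rw [mem_union, hΓdec, hcone]
    simp only [mem_union, or_and_right, exists_or]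

/-- if `Γ` has a Boolean decomposition with initial part `S`, and the
subcomplex `Γ_e ≤ Γ` has a Boolean decomposition
`Γ_e = {F_e ∪ G_e : F_e ∈ S_e, G_e ⊆ [d − 2|F_e| − 2]}` with `S_e ≤ S`, then
`Γ' = Γ ∪ (Γ_e * u)` (new vertex `u`) has a Boolean decomposition with initial part
`S' = S ∪ (S_e * u)`. -/
theorem stmt7 (d : ℕ) (Γ S Γe Se : Finset (Finset ℕ)) (u : ℕ)
    (hΓ : HasBooleanDecomp d Γ S)
    (hSe : Se ⊆ S) (hΓe : Γe ⊆ Γ)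
    (hΓedec : ∀ A : Finset ℕ,
      A ∈ Γe ↔ ∃ F ∈ Se, ∃ G ⊆ Finset.Icc 1 (d - 2 * F.card - 2), A = F ∪ G)
    (hud : u ∉ Finset.Icc 1 d) (hu : ∀ A ∈ Γ, u ∉ A) :
    HasBooleanDecomp d (Γ ∪ Γe.image (insert u)) (S ∪ Se.image (insert u)) :=
  stmt7_general d Γ S Γe Se u hΓ hSe hΓedec hud hu
end

section
/- Let Γ be a (d−1)-dimensional simplicial complex with Boolean decomposition Γ = {F ∪ G : F ∈ S, G ⊆ [d−2|F|]}, and let u be a vertex of S such that u ∉ [d]. Then Ast_Γ(u) = {F ∪ G : F ∈ Ast_S(u), G ⊆ [d−2|F|]}; that is, the antistar of u in Γ has a Boolean decomposition with initial part Ast_S(u). -/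
open Polynomial Finset

variable {V : Type*} [DecidableEq V]

/-- The antistar of a vertex `u`: faces not containing `u`. -/
def ast (K : Finset (Finset V)) (u : V) : Finset (Finset V) :=
  K.filter fun A => u ∉ A

theorem ast_filter (K : Finset (Finset V)) (p : Finset V → Prop) [DecidablePred p] (u : V) :
    ast (K.filter p) u = (ast K u).filter p := by
  simp only [ast, filter_filter, and_comm]

theorem mem_ast_union_iff {K : Finset (Finset V)} {F G : Finset V} {u : V} (hG : u ∉ G) :
    F ∪ G ∈ ast K u ↔ F ∪ G ∈ K ∧ u ∉ F := by
  simp only [ast, mem_filter, mem_union, hG, or_false]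

theorem notMem_of_subset_Icc_sub {d k u : ℕ} {G : Finset ℕ} (hG : G ⊆ Icc 1 (d - k))
    (hud : u ∉ Icc 1 d) : u ∉ G :=
  fun h => hud (Icc_subset_Icc_right (Nat.sub_le d k) (hG h))

theorem stmt9_general (d : ℕ) (Γ S : Finset (Finset ℕ)) (u : ℕ)
    (hΓ : HasBooleanDecomp d Γ S)
    (hud : u ∉ Finset.Icc 1 d) :
    HasBooleanDecomp d (ast Γ u) (ast S u) := by
  obtain ⟨hS, hdec⟩ := hΓ
  refine ⟨by rw [hS, ast_filter], fun A => ⟨?_, ?_⟩⟩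
  · intro hA
    obtain ⟨F, hF, G, hG, rfl⟩ := (hdec _).1 (mem_filter.1 hA).1
    have huF := ((mem_ast_union_iff (notMem_of_subset_Icc_sub hG hud)).1 hA).2
    exact ⟨F, mem_filter.2 ⟨hF, huF⟩, G, hG, rfl⟩
  · rintro ⟨F, hF, G, hG, rfl⟩
    obtain ⟨hFS, huF⟩ := mem_filter.1 hF
    exact (mem_ast_union_iff (notMem_of_subset_Icc_sub hG hud)).2
      ⟨(hdec _).2 ⟨F, hFS, G, hG, rfl⟩, huF⟩

/-- if `Γ` has a Boolean decomposition with initial part `S` and `u` is a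
vertex of `S` with `u ∉ [d]`, then `Ast_Γ(u) = {F ∪ G : F ∈ Ast_S(u), G ⊆ [d−2|F|]}`,
i.e. the antistar has a Boolean decomposition with initial part `Ast_S(u)`. -/
theorem stmt9 (d : ℕ) (Γ S : Finset (Finset ℕ)) (u : ℕ)
    (hΓ : HasBooleanDecomp d Γ S) (hu : ({u} : Finset ℕ) ∈ S)
    (hud : u ∉ Finset.Icc 1 d) :
    HasBooleanDecomp d (ast Γ u) (ast S u) :=
  stmt9_general d Γ S u hΓ hud
end

section
/- Let Δ be a flag simplicial complex and e = {a,b} an edge not contained in any induced 4-cycle of the 1-skeleton of Δ. Then the edge contraction Δ̃ obtained by identifying a and b is again a flag simplicial complex. -/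
open Polynomial Finset

variable {V : Type*} [DecidableEq V]

/-!
Contraction is the image of `Δ` under the vertex map `b ↦ a`, hence again closed under subsets.
For flagness, let `A` be a clique of the contraction. Then `b ∉ A` and `S = A \ {a}` is a clique
of `Δ`, each of whose vertices is adjacent in `Δ` to `a` or to `b`. A vertex `s` not adjacent to
`a` together with a vertex `t` not adjacent to `b` would give the induced 4-cycle `a b s t`, so
`S ∪ {a}` or `S ∪ {b}` is a clique of `Δ`, hence a face, and its image is `A`.
-/

def IsClique (K : Finset (Finset V)) (A : Finset V) : Prop :=
  (∀ x ∈ A, ({x} : Finset V) ∈ K) ∧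
    ∀ x ∈ A, ∀ y ∈ A, x ≠ y → ({x, y} : Finset V) ∈ K

theorem IsClique.subset {K : Finset (Finset V)} {A B : Finset V} (hA : IsClique K A)
    (hBA : B ⊆ A) : IsClique K B :=
  ⟨fun x hx => hA.1 x (hBA hx), fun x hx y hy => hA.2 x (hBA hx) y (hBA hy)⟩

theorem IsFlag.insert_mem {K : Finset (Finset V)} (hK : IsFlag K) {S : Finset V} {v : V}
    (hS : IsClique K S) (hv : ({v} : Finset V) ∈ K)
    (hvS : ∀ s ∈ S, ({v, s} : Finset V) ∈ K) : insert v S ∈ K := by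
  refine hK _ (insert_nonempty v S) ?_ ?_
  · simpa only [forall_mem_insert] using ⟨hv, hS.1⟩
  · simp only [forall_mem_insert]
    refine ⟨⟨(absurd rfl ·), fun y hy _ => hvS y hy⟩,
      fun x hx => ⟨fun _ => ?_, hS.2 x hx⟩⟩
    rw [pair_comm]
    exact hvS x hx

theorem IsSimpComplex.image {U W : Type*} [DecidableEq W] {K : Finset (Finset U)}
    (hK : IsSimpComplex K) (f : U → W) : IsSimpComplex (K.image (image f)) := by
  refine ⟨mem_image.2 ⟨∅, hK.1, image_empty f⟩, ?_⟩
  rintro _ hC B hB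
  obtain ⟨F, hF, rfl⟩ := mem_image.1 hC
  obtain ⟨F', hF'F, rfl⟩ := subset_image_iff.1 hB
  exact mem_image_of_mem _ (hK.2 F hF F' hF'F)

def mergeVertex (a b : V) (x : V) : V :=
  if x = b then a else x

section Contraction

variable {K : Finset (Finset V)} {a b : V}

theorem image_mergeVertex_of_notMem {A : Finset V} (hb : b ∉ A) :
    A.image (mergeVertex a b) = A := by
  conv_rhs => rw [← image_id (s := A)]
  exact image_congr fun x hx => if_neg (ne_of_mem_of_not_mem hx hb)

theorem image_mergeVertex (A : Finset V) :
    A.image (mergeVertex a b) = if b ∈ A then insert a (A.erase b) else A := by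
  split_ifs with hb
  · conv_lhs => rw [← insert_erase hb]
    rw [image_insert, image_mergeVertex_of_notMem (notMem_erase b A), mergeVertex, if_pos rfl]
  · exact image_mergeVertex_of_notMem hb

theorem contractEdge_eq_image : contractEdge K a b = K.image (image (mergeVertex a b)) := by
  unfold contractEdge
  congr 1
  funext A
  exact (image_mergeVertex A).symm

theorem IsSimpComplex.contractEdge (hK : IsSimpComplex K) :
    IsSimpComplex (contractEdge K a b) := by
  rw [contractEdge_eq_image]
  exact hK.image _

theorem mem_contractEdge_of_notMem {F : Finset V} (hF : F ∈ K) (hb : b ∉ F) :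
    F ∈ contractEdge K a b := by
  rw [contractEdge_eq_image]
  exact mem_image.2 ⟨F, hF, image_mergeVertex_of_notMem hb⟩

theorem insert_mem_contractEdge {S : Finset V} (hS : insert b S ∈ K) (hb : b ∉ S) :
    insert a S ∈ contractEdge K a b := by
  rw [contractEdge_eq_image]
  refine mem_image.2 ⟨_, hS, ?_⟩
  rw [image_insert, image_mergeVertex_of_notMem hb, mergeVertex, if_pos rfl]

theorem notMem_of_mem_contractEdge (hab : a ≠ b) {C : Finset V} (hC : C ∈ contractEdge K a b) :
    b ∉ C := by
  rw [contractEdge_eq_image] at hC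
  obtain ⟨F, -, rfl⟩ := mem_image.1 hC
  simp only [mem_image, mergeVertex, not_exists, not_and]
  intro x _
  split_ifs with hx
  exacts [hab, hx]

theorem mem_of_mem_contractEdge {C : Finset V} (hC : C ∈ contractEdge K a b) (ha : a ∉ C) :
    C ∈ K := by
  rw [contractEdge_eq_image] at hC
  obtain ⟨F, hF, rfl⟩ := mem_image.1 hC
  have hb : b ∉ F := fun hb => ha (mem_image.2 ⟨b, hb, if_pos rfl⟩)
  rwa [image_mergeVertex_of_notMem hb]

theorem pair_mem_or_pair_mem_of_mem_contractEdge (hK : IsSimpComplex K) {s : V} (hs : s ≠ a)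
    (hC : ({a, s} : Finset V) ∈ contractEdge K a b) :
    ({a, s} : Finset V) ∈ K ∨ ({b, s} : Finset V) ∈ K := by
  rw [contractEdge_eq_image] at hC
  obtain ⟨F, hF, hFC⟩ := mem_image.1 hC
  have hsF : s ∈ F := by
    obtain ⟨x, hx, hxs⟩ := mem_image.1 (hFC ▸ mem_insert_of_mem (mem_singleton_self s))
    unfold mergeVertex at hxs
    split_ifs at hxs
    exacts [absurd hxs.symm hs, hxs ▸ hx]
  obtain ⟨x, hx, hxa⟩ := mem_image.1 (hFC ▸ mem_insert_self a {s})
  unfold mergeVertex at hxa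
  split_ifs at hxa with hxb
  · exact .inr (hK.2 F hF _ (insert_subset (hxb ▸ hx) (singleton_subset_iff.2 hsF)))
  · exact .inl (hK.2 F hF _ (insert_subset (hxa ▸ hx) (singleton_subset_iff.2 hsF)))

theorem IsClique.of_contractEdge {A : Finset V} (hA : IsClique (contractEdge K a b) A)
    (ha : a ∉ A) : IsClique K A := by
  have hne {x : V} (hx : x ∈ A) : a ≠ x := (ne_of_mem_of_not_mem hx ha).symm
  exact ⟨fun x hx => mem_of_mem_contractEdge (hA.1 x hx) (by simp [hne hx]),
    fun x hx y hy hxy =>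
      mem_of_mem_contractEdge (hA.2 x hx y hy hxy) (by simp [hne hx, hne hy])⟩

end Contraction

theorem AdmissibleEdge.forall_or_forall {K : Finset (Finset V)} {a b : V}
    (hadm : AdmissibleEdge K a b) (hab : a ≠ b) {S : Finset V} (haS : a ∉ S) (hbS : b ∉ S)
    (hS : IsClique K S)
    (hadj : ∀ s ∈ S, ({a, s} : Finset V) ∈ K ∨ ({b, s} : Finset V) ∈ K) :
    (∀ s ∈ S, ({a, s} : Finset V) ∈ K) ∨ ∀ t ∈ S, ({b, t} : Finset V) ∈ K := by
  by_contra! ⟨⟨s, hs, has⟩, ⟨t, ht, hbt⟩⟩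
  have hst : s ≠ t := by
    rintro rfl
    exact (hadj s hs).elim has hbt
  have hcard : ({a, b, s, t} : Finset V).card = 4 := by
    have : a ≠ s := fun h => haS (h ▸ hs)
    have : a ≠ t := fun h => haS (h ▸ ht)
    have : b ≠ s := fun h => hbS (h ▸ hs)
    have : b ≠ t := fun h => hbS (h ▸ ht)
    simp [card_insert_of_notMem, *]
  have hta : ({t, a} : Finset V) ∈ K := pair_comm a t ▸ (hadj t ht).resolve_right hbt
  exact hadm ⟨s, t, hcard, (hadj s hs).resolve_left has, hS.2 s hs t ht hst, hta, has, hbt⟩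

/-- Lutz–Nevo: contracting an admissible edge of a flag simplicial
complex yields again a flag simplicial complex. -/
theorem stmt13 (Δ : Finset (Finset V)) (a b : V)
    (hΔ : IsSimpComplex Δ) (hflag : IsFlag Δ) (hab : a ≠ b)
    (he : ({a, b} : Finset V) ∈ Δ) (hadm : AdmissibleEdge Δ a b) :
    IsSimpComplex (contractEdge Δ a b) ∧ IsFlag (contractEdge Δ a b) := by
  have ha : ({a} : Finset V) ∈ Δ := hΔ.2 _ he _ (by simp)
  have hb : ({b} : Finset V) ∈ Δ := hΔ.2 _ he _ (by simp)
  refine ⟨hΔ.contractEdge, fun A hA hvert hedge => ?_⟩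
  have hcl : IsClique (contractEdge Δ a b) A := ⟨hvert, hedge⟩
  have hbA : b ∉ A := fun hbA =>
    notMem_of_mem_contractEdge hab (hvert b hbA) (mem_singleton_self b)
  by_cases haA : a ∈ A
  · have haS : a ∉ A.erase a := notMem_erase a A
    have hbS : b ∉ A.erase a := fun h => hbA (mem_of_mem_erase h)
    have hS : IsClique Δ (A.erase a) := (hcl.subset (erase_subset a A)).of_contractEdge haS
    have hadj : ∀ s ∈ A.erase a, ({a, s} : Finset V) ∈ Δ ∨ ({b, s} : Finset V) ∈ Δ :=
      fun s hs => pair_mem_or_pair_mem_of_mem_contractEdge hΔ (ne_of_mem_erase hs)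
        (hedge a haA s (mem_of_mem_erase hs) (ne_of_mem_erase hs).symm)
    rw [← insert_erase haA] at hbA ⊢
    rcases hadm.forall_or_forall hab haS hbS hS hadj with hall | hall
    · exact mem_contractEdge_of_notMem (hflag.insert_mem hS ha hall) hbA
    · exact insert_mem_contractEdge (hflag.insert_mem hS hb hall) hbS
  · have hS := hcl.of_contractEdge haA
    exact mem_contractEdge_of_notMem (hflag A hA hS.1 hS.2) hbA
end

section
/- Suppose Γ (dimension d−1) has a Boolean decomposition with initial part S, and Γ̃ = Ast_Γ(u) for some vertex u of S not contained in [d] and not in any face meeting [d]∖∅ jointly with the Boolean structure (i.e., the removal is compatible with the decomposition). Then f_{Γ̃}(t) = f_Γ(t) − t Σ_{F ∈ lk_S(u)} t^{|F|}(1+t)^{d−2|F|−2}. -/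
open Polynomial Finset

variable {V : Type*} [DecidableEq V]

lemma aux_powerset_sum (s : Finset ℕ) :
    ∑ G ∈ s.powerset, (Polynomial.X : Polynomial ℤ) ^ G.card = (1 + Polynomial.X) ^ s.card := by
  classical
  have := Finset.prod_add (fun _ : ℕ => (Polynomial.X : Polynomial ℤ)) (fun _ => (1 : Polynomial ℤ)) s
  simp only [Finset.prod_const, one_pow, mul_one] at this
  rw [add_comm]
  exact this.symm

lemma aux_recF {d : ℕ} {F G : Finset ℕ} (hF : Disjoint F (Finset.Icc 1 d))
    (hG : G ⊆ Finset.Icc 1 d) : (F ∪ G) \ Finset.Icc 1 d = F := by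
  rw [Finset.union_sdiff_distrib, Finset.sdiff_eq_self_of_disjoint hF,
    Finset.sdiff_eq_empty_iff_subset.2 hG, Finset.union_empty]

lemma aux_key (d : ℕ) (T Γ' : Finset (Finset ℕ))
    (hT : ∀ F ∈ T, Disjoint F (Finset.Icc 1 d))
    (h : ∀ A, A ∈ Γ' ↔ ∃ F ∈ T, ∃ G ⊆ Finset.Icc 1 (d - 2 * F.card), A = F ∪ G) :
    fpoly Γ' = ∑ F ∈ T,
      Polynomial.X ^ F.card * (1 + Polynomial.X) ^ (d - 2 * F.card) := by
  classical
  have hsub : ∀ F : Finset ℕ, Finset.Icc 1 (d - 2 * F.card) ⊆ Finset.Icc 1 d := fun F =>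
    Finset.Icc_subset_Icc le_rfl (Nat.sub_le _ _)
  have hΓ'eq : Γ' = T.biUnion
      (fun F => (Finset.Icc 1 (d - 2 * F.card)).powerset.image (fun G => F ∪ G)) := by
    ext A
    simp only [Finset.mem_biUnion, Finset.mem_image, Finset.mem_powerset, h]
    constructor
    · rintro ⟨F, hF, G, hG, rfl⟩; exact ⟨F, hF, G, hG, rfl⟩
    · rintro ⟨F, hF, G, hG, rfl⟩; exact ⟨F, hF, G, hG, rfl⟩
  have hdisj : (↑T : Set (Finset ℕ)).PairwiseDisjoint
      (fun F => (Finset.Icc 1 (d - 2 * F.card)).powerset.image (fun G => F ∪ G)) := by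
    intro F₁ h₁ F₂ h₂ hne
    simp only [Function.onFun]
    rw [Finset.disjoint_left]
    rintro A hA₁ hA₂
    simp only [Finset.mem_image, Finset.mem_powerset] at hA₁ hA₂
    obtain ⟨G₁, hG₁, rfl⟩ := hA₁
    obtain ⟨G₂, hG₂, hEq⟩ := hA₂
    apply hne
    have e1 : (F₁ ∪ G₁) \ Finset.Icc 1 d = F₁ :=
      aux_recF (hT F₁ h₁) (hG₁.trans (hsub F₁))
    have e2 : (F₂ ∪ G₂) \ Finset.Icc 1 d = F₂ :=
      aux_recF (hT F₂ h₂) (hG₂.trans (hsub F₂))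
    rw [← e1, ← hEq, e2]
  rw [hΓ'eq, fpoly, Finset.sum_biUnion hdisj]
  refine Finset.sum_congr rfl fun F hF => ?_
  rw [Finset.sum_image ?inj]
  case inj =>
    intro G₁ hG₁ G₂ hG₂ hEq
    simp only [Finset.mem_coe, Finset.mem_powerset] at hG₁ hG₂
    have e1 : (F ∪ G₁) \ F = G₁ := by
      rw [Finset.union_sdiff_cancel_left]
      exact Finset.disjoint_of_subset_right (hG₁.trans (hsub F)) (hT F hF)
    have e2 : (F ∪ G₂) \ F = G₂ := by
      rw [Finset.union_sdiff_cancel_left]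
      exact Finset.disjoint_of_subset_right (hG₂.trans (hsub F)) (hT F hF)
    rw [← e1, show F ∪ G₁ = F ∪ G₂ from hEq, e2]
  have hcard : ∀ G ∈ (Finset.Icc 1 (d - 2 * F.card)).powerset,
      (F ∪ G).card = F.card + G.card := by
    intro G hG
    rw [Finset.mem_powerset] at hG
    exact Finset.card_union_of_disjoint
      (Finset.disjoint_of_subset_right (hG.trans (hsub F)) (hT F hF))
  calc ∑ G ∈ (Finset.Icc 1 (d - 2 * F.card)).powerset, (Polynomial.X : Polynomial ℤ) ^ (F ∪ G).card
      = ∑ G ∈ (Finset.Icc 1 (d - 2 * F.card)).powerset,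
          Polynomial.X ^ F.card * Polynomial.X ^ G.card := by
        refine Finset.sum_congr rfl fun G hG => ?_
        rw [hcard G hG, pow_add]
    _ = Polynomial.X ^ F.card * (1 + Polynomial.X) ^ (d - 2 * F.card) := by
        rw [← Finset.mul_sum, aux_powerset_sum, Nat.card_Icc, Nat.add_sub_cancel]

/-- if `Γ` has a Boolean decomposition with initial part `S`,
`u` is a vertex of `S` with `u ∉ [d]`, and the removal of `u` is compatible with the
Boolean structure (`Ast_Γ(u) = {F ∪ G : F ∈ Ast_S(u), G ⊆ [d−2|F|]}`), then
`f_{Γ̃}(t) = f_Γ(t) − t Σ_{F ∈ lk_S(u)} t^{|F|}(1+t)^{d−2|F|−2}`. -/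
theorem stmt16 (d : ℕ) (Γ S : Finset (Finset ℕ)) (u : ℕ)
    (hΓc : IsSimpComplex Γ) (hΓ : HasBooleanDecomp d Γ S)
    (hu : ({u} : Finset ℕ) ∈ S) (hud : u ∉ Finset.Icc 1 d)
    (hcompat : ∀ A : Finset ℕ, A ∈ ast Γ u ↔
      ∃ F ∈ ast S u, ∃ G ⊆ Finset.Icc 1 (d - 2 * F.card), A = F ∪ G) :
    fpoly (ast Γ u) = fpoly Γ
      - Polynomial.X * ∑ F ∈ lk S {u},
          Polynomial.X ^ F.card * (1 + Polynomial.X) ^ (d - 2 * F.card - 2) := by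
  classical
  obtain ⟨hSdef, hdecomp⟩ := hΓ
  have hTdisj : ∀ F ∈ S, Disjoint F (Finset.Icc 1 d) := by
    intro F hF; rw [hSdef] at hF; exact (Finset.mem_filter.1 hF).2
  have hSdc : ∀ A ∈ S, ∀ B ⊆ A, B ∈ S := by
    intro A hA B hB
    rw [hSdef] at hA ⊢
    rw [Finset.mem_filter] at hA ⊢
    exact ⟨hΓc.2 A hA.1 B hB, Finset.disjoint_of_subset_left hB hA.2⟩
  have h1 : fpoly Γ = ∑ F ∈ S,
      Polynomial.X ^ F.card * (1 + Polynomial.X) ^ (d - 2 * F.card) :=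
    aux_key d S Γ hTdisj hdecomp
  have h2 : fpoly (ast Γ u) = ∑ F ∈ ast S u,
      Polynomial.X ^ F.card * (1 + Polynomial.X) ^ (d - 2 * F.card) :=
    aux_key d (ast S u) (ast Γ u)
      (fun F hF => hTdisj F (Finset.mem_filter.1 hF).1) hcompat
  have hsplit : ∑ F ∈ S, (Polynomial.X : Polynomial ℤ) ^ F.card * (1 + Polynomial.X) ^ (d - 2 * F.card)
      = (∑ F ∈ ast S u, Polynomial.X ^ F.card * (1 + Polynomial.X) ^ (d - 2 * F.card))
        + ∑ F ∈ S.filter (fun F => u ∈ F),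
            Polynomial.X ^ F.card * (1 + Polynomial.X) ^ (d - 2 * F.card) := by
    have hh := Finset.sum_filter_add_sum_filter_not S (fun F => u ∉ F)
      (fun F => (Polynomial.X : Polynomial ℤ) ^ F.card * (1 + Polynomial.X) ^ (d - 2 * F.card))
    rw [ast, ← hh]
    congr 1
    apply Finset.sum_congr _ (fun _ _ => rfl)
    apply Finset.filter_congr
    intro F _
    simp
  have h3 : ∑ F ∈ S.filter (fun F => u ∈ F),
        (Polynomial.X : Polynomial ℤ) ^ F.card * (1 + Polynomial.X) ^ (d - 2 * F.card)
      = Polynomial.X * ∑ F ∈ lk S {u},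
          Polynomial.X ^ F.card * (1 + Polynomial.X) ^ (d - 2 * F.card - 2) := by
    rw [Finset.mul_sum]
    refine Finset.sum_nbij' (fun F => F.erase u) (fun F => insert u F) ?_ ?_ ?_ ?_ ?_
    · intro F hF
      rw [Finset.mem_filter] at hF
      obtain ⟨hFS, huF⟩ := hF
      rw [lk, Finset.mem_filter]
      refine ⟨hSdc F hFS _ (Finset.erase_subset u F), ?_, ?_⟩
      · have : F.erase u ∪ {u} = F := by
          ext x
          simp only [Finset.mem_union, Finset.mem_erase, Finset.mem_singleton]
          constructor
          · rintro (⟨_, hx⟩ | rfl); exact hx; exact huF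
          · intro hx; by_cases hxu : x = u
            · exact Or.inr hxu
            · exact Or.inl ⟨hxu, hx⟩
        rw [this]; exact hFS
      · simp [Finset.disjoint_singleton_right]
    · intro F hF
      rw [lk, Finset.mem_filter] at hF
      obtain ⟨hFS, hFu, hdis⟩ := hF
      rw [Finset.mem_filter]
      have heq : insert u F = F ∪ {u} := by
        ext x; simp [or_comm]
      refine ⟨?_, Finset.mem_insert_self u F⟩
      show insert u F ∈ S
      rw [heq]
      exact hFu
    · intro F hF
      rw [Finset.mem_filter] at hF
      exact Finset.insert_erase hF.2
    · intro F hF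
      rw [lk, Finset.mem_filter] at hF
      have : u ∉ F := by
        have := hF.2.2
        simp [Finset.disjoint_singleton_right] at this
        exact this
      exact Finset.erase_insert this
    · intro F hF
      rw [Finset.mem_filter] at hF
      obtain ⟨hFS, huF⟩ := hF
      have hc : F.card = (F.erase u).card + 1 := by
        rw [Finset.card_erase_of_mem huF]
        have : 1 ≤ F.card := Finset.card_pos.2 ⟨u, huF⟩
        omega
      rw [hc]
      have he : d - 2 * ((F.erase u).card + 1) = d - 2 * (F.erase u).card - 2 := by omega
      rw [he, pow_succ]
      ring
  rw [h1, h2, hsplit, h3]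
  ring
end
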